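/- Let B be an n×n Hermitian positive definite complex matrix with diagonal normalization B̂ and potential Γ(B) = tr(B̂^{-1}) − n. Then κ(B̂) ≤ (1 + √(Γ(B)/2) + Γ(B)/2)², where κ(M) = ‖M‖·‖M^{-1}‖ is the condition number in the ℓ₂ operator norm. -/

import Mathlib

/-! The normalization `B̂` is positive definite with unit diagonal, so its eigenvalues `λᵢ > 0`
satisfy `∑ λᵢ = n`, whence `Γ(B) = ∑ (λᵢ⁻¹ + λᵢ - 2)`, a sum of nonnegative terms, while
`κ(B̂) = λ_max / λ_min`. Keeping only the terms of `a = λ_min` and `b = λ_max` and regrouping them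
as `(a⁻¹ + b - 2√(b/a)) + (b⁻¹ + a - 2√(a/b)) + 2 (t + t⁻¹ - 2)` with `t = √(b/a)`, where the first
two brackets are squares, gives `t + t⁻¹ - 2 ≤ Γ/2`, i.e. `(t - 1)² ≤ (Γ/2) t`, which forces
`t ≤ 1 + √(Γ/2) + Γ/2`; square it, as `κ(B̂) = t²`. -/

open Matrix
open scoped ComplexOrder

noncomputable section

/-- `D_B^{1/2}`: the diagonal matrix whose entries are the square roots of the
diagonal entries of `B`. -/
def sqrtDiag {n : ℕ} (B : Matrix (Fin n) (Fin n) ℂ) : Matrix (Fin n) (Fin n) ℂ :=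
  Matrix.diagonal fun i => (Real.sqrt (B i i).re : ℂ)

/-- The diagonal normalization `B̂ = D_B^{-1/2} B D_B^{-1/2}`. -/
def hatM {n : ℕ} (B : Matrix (Fin n) (Fin n) ℂ) : Matrix (Fin n) (Fin n) ℂ :=
  (sqrtDiag B)⁻¹ * B * (sqrtDiag B)⁻¹

/-- The potential function `Γ(B) = tr(B̂⁻¹) − n` (a real number for Hermitian
positive definite `B`). -/
def Gamma {n : ℕ} (B : Matrix (Fin n) (Fin n) ℂ) : ℝ :=
  (Matrix.trace ((hatM B)⁻¹)).re - n

/-- The `ℓ₂` operator norm of a matrix. -/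
def opNorm {m n : ℕ} (M : Matrix (Fin m) (Fin n) ℂ) : ℝ :=
  ‖LinearMap.toContinuousLinearMap (Matrix.toEuclideanLin M)‖

/-- The condition number `κ(M) = ‖M‖·‖M⁻¹‖` in the `ℓ₂` operator norm. -/
def kappa {n : ℕ} (M : Matrix (Fin n) (Fin n) ℂ) : ℝ :=
  opNorm M * opNorm M⁻¹

theorem inv_add_sub_two_nonneg {x : ℝ} (hx : 0 < x) : 0 ≤ x⁻¹ + x - 2 := by
  have : x⁻¹ + x - 2 = (x - 1) ^ 2 / x := by field_simp; ring
  rw [this]; positivity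

theorem div_add_div_sub_two_le {p q : ℝ} (hp : 0 < p) (hq : 0 < q) :
    q / p + p / q - 2 ≤ ((p ^ 2)⁻¹ + p ^ 2 - 2 + ((q ^ 2)⁻¹ + q ^ 2 - 2)) / 2 := by
  have hdiff : ((p ^ 2)⁻¹ + p ^ 2 - 2 + ((q ^ 2)⁻¹ + q ^ 2 - 2)) / 2 - (q / p + p / q - 2)
      = ((p⁻¹ - q) ^ 2 + (q⁻¹ - p) ^ 2) / 2 := by
    field_simp; ring
  rw [← sub_nonneg, hdiff]
  positivity

theorem le_one_add_sqrt_add_of_add_inv_sub_two_le {t c : ℝ} (ht : 0 < t)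
    (h : t + t⁻¹ - 2 ≤ c) : t ≤ 1 + √c + c := by
  have hc : 0 ≤ c := by linarith [inv_add_sub_two_nonneg ht]
  have hsq : (t - 1) ^ 2 ≤ c * t := by
    have : t + t⁻¹ - 2 = (t - 1) ^ 2 / t := by field_simp; ring
    rwa [this, div_le_iff₀ ht] at h
  obtain ⟨s, hs, rfl⟩ : ∃ s, 0 ≤ s ∧ c = s ^ 2 :=
    ⟨√c, Real.sqrt_nonneg c, (Real.sq_sqrt hc).symm⟩
  rw [Real.sqrt_sq hs]
  by_contra! hlt
  nlinarith [mul_nonneg hs (sq_nonneg s), mul_pos (sub_pos.2 hlt) (sub_pos.2 hlt),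
    mul_nonneg (sub_pos.2 hlt).le (mul_nonneg hs hs)]

theorem div_le_of_inv_add_sub_two_add_le {a b c : ℝ} (ha : 0 < a) (hb : 0 < b)
    (h : (a⁻¹ + a - 2) + (b⁻¹ + b - 2) ≤ 2 * c) : b / a ≤ (1 + √c + c) ^ 2 := by
  obtain ⟨p, hp, rfl⟩ : ∃ p, 0 < p ∧ a = p ^ 2 :=
    ⟨√a, Real.sqrt_pos.2 ha, (Real.sq_sqrt ha.le).symm⟩
  obtain ⟨q, hq, rfl⟩ : ∃ q, 0 < q ∧ b = q ^ 2 :=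
    ⟨√b, Real.sqrt_pos.2 hb, (Real.sq_sqrt hb.le).symm⟩
  have hqp : q / p ≤ 1 + √c + c := by
    refine le_one_add_sqrt_add_of_add_inv_sub_two_le (div_pos hq hp) ?_
    rw [inv_div]
    linarith [div_add_div_sub_two_le hp hq]
  rw [← div_pow]
  exact pow_le_pow_left₀ (div_pos hq hp).le hqp 2

theorem norm_mul_norm_inv_le_of_forall_div_le {ι : Type*} [Fintype ι] {v : ι → ℝ}
    (hv : ∀ i, 0 < v i) {C : ℝ} (hC : 0 ≤ C) (h : ∀ i j, v i / v j ≤ C) :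
    ‖v‖ * ‖v⁻¹‖ ≤ C := by
  cases isEmpty_or_nonempty ι
  · simpa [Subsingleton.elim v 0] using hC
  obtain ⟨j, hj⟩ := Finite.exists_min v
  have hv_le : ‖v‖ ≤ C * v j := by
    refine (pi_norm_le_iff_of_nonneg (by have := hv j; positivity)).2 fun i => ?_
    rw [Real.norm_of_nonneg (hv i).le, ← div_le_iff₀ (hv j)]
    exact h i j
  have hinv_le : ‖v⁻¹‖ ≤ (v j)⁻¹ := by
    refine (pi_norm_le_iff_of_nonneg (inv_pos.2 (hv j)).le).2 fun i => ?_
    rw [Pi.inv_apply, Real.norm_of_nonneg (inv_pos.2 (hv i)).le]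
    exact inv_anti₀ (hv j) (hj i)
  calc ‖v‖ * ‖v⁻¹‖ ≤ C * v j * (v j)⁻¹ :=
        mul_le_mul hv_le hinv_le (norm_nonneg _) (hv_le.trans' (norm_nonneg _))
    _ = C := by field_simp [(hv j).ne']

theorem norm_mul_norm_inv_le_of_sum_le {ι : Type*} [Fintype ι] {v : ι → ℝ}
    (hv : ∀ i, 0 < v i) {Γ : ℝ} (hΓ : ∑ i, ((v i)⁻¹ + v i - 2) ≤ Γ) :
    ‖v‖ * ‖v⁻¹‖ ≤ (1 + √(Γ / 2) + Γ / 2) ^ 2 := by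
  have hterm : ∀ i ∈ Finset.univ, 0 ≤ (v i)⁻¹ + v i - 2 :=
    fun i _ => inv_add_sub_two_nonneg (hv i)
  have hΓ_nonneg : 0 ≤ Γ := (Finset.sum_nonneg hterm).trans hΓ
  refine norm_mul_norm_inv_le_of_forall_div_le hv (sq_nonneg _) fun i j => ?_
  obtain rfl | hij := eq_or_ne i j
  · rw [div_self (hv i).ne']
    nlinarith [Real.sqrt_nonneg (Γ / 2)]
  refine div_le_of_inv_add_sub_two_add_le (hv j) (hv i) ?_
  have := Finset.add_le_sum hterm (Finset.mem_univ j) (Finset.mem_univ i) hij.symm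
  linarith

open scoped Matrix.Norms.L2Operator

namespace Matrix

variable {𝕜 n : Type*} [RCLike 𝕜] [Fintype n] [DecidableEq n] {A : Matrix n n 𝕜}

theorem IsHermitian.trace_cfc (hA : A.IsHermitian) (f : ℝ → ℝ) :
    (cfc f A).trace = ∑ i, (f (hA.eigenvalues i) : 𝕜) := by
  rw [hA.cfc_eq, IsHermitian.cfc, Unitary.conjStarAlgAut_apply, trace_mul_cycle,
    Unitary.coe_star_mul_self, one_mul, trace_diagonal]
  rfl

theorem IsHermitian.l2_opNorm_cfc (hA : A.IsHermitian) (f : ℝ → ℝ) :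
    ‖cfc f A‖ = ‖f ∘ hA.eigenvalues‖ := by
  rw [hA.cfc_eq, IsHermitian.cfc, Unitary.conjStarAlgAut_apply, mul_assoc,
    CStarRing.norm_coe_unitary_mul, ← Unitary.coe_star, CStarRing.norm_mul_coe_unitary,
    l2_opNorm_diagonal]
  simp [Pi.norm_def]

theorem PosDef.inv_eq_cfc (hA : A.PosDef) : A⁻¹ = cfc (·⁻¹ : ℝ → ℝ) A := by
  rw [cfc_ringInverse_id (R := ℝ) (a := A) hA.isUnit hA.isHermitian.isSelfAdjoint,
    nonsing_inv_eq_ringInverse]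

theorem PosDef.l2_opNorm_mul_l2_opNorm_inv (hA : A.PosDef) :
    ‖A‖ * ‖A⁻¹‖ = ‖hA.isHermitian.eigenvalues‖ * ‖hA.isHermitian.eigenvalues⁻¹‖ := by
  have hnorm : ‖A‖ = ‖hA.isHermitian.eigenvalues‖ := by
    simpa only [cfc_id ℝ A hA.isHermitian.isSelfAdjoint, Function.id_comp]
      using hA.isHermitian.l2_opNorm_cfc id
  rw [hnorm, hA.inv_eq_cfc, hA.isHermitian.l2_opNorm_cfc]
  rfl

theorem PosDef.re_trace_inv_sub_card (hA : A.PosDef) (hdiag : ∀ i, A i i = 1) :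
    RCLike.re A⁻¹.trace - Fintype.card n =
      ∑ i, ((hA.isHermitian.eigenvalues i)⁻¹ + hA.isHermitian.eigenvalues i - 2) := by
  have hsum : ∑ i, hA.isHermitian.eigenvalues i = Fintype.card n := by
    have := hA.isHermitian.trace_eq_sum_eigenvalues
    simp only [trace, diag, hdiag, Finset.sum_const, Finset.card_univ, nsmul_eq_mul,
      mul_one] at this
    exact_mod_cast this.symm
  rw [hA.inv_eq_cfc, hA.isHermitian.trace_cfc, Finset.sum_sub_distrib, Finset.sum_add_distrib,
    hsum, map_sum]
  simp only [RCLike.ofReal_re, Finset.sum_const, Finset.card_univ, nsmul_eq_mul]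
  ring

end Matrix

theorem opNorm_eq_l2_opNorm {m n : ℕ} (M : Matrix (Fin m) (Fin n) ℂ) : opNorm M = ‖M‖ := rfl

section DiagonalNormalization

variable {n : ℕ} {B : Matrix (Fin n) (Fin n) ℂ}

theorem isHermitian_sqrtDiag (B : Matrix (Fin n) (Fin n) ℂ) : (sqrtDiag B).IsHermitian :=
  isHermitian_diagonal_iff.2 fun _ => Complex.conj_ofReal _

theorem sqrtDiag_apply_self_ne_zero (hB : ∀ i, 0 < B i i) (i : Fin n) :
    (√(B i i).re : ℂ) ≠ 0 :=
  Complex.ofReal_ne_zero.2 (Real.sqrt_pos.2 (Complex.pos_iff.1 (hB i)).1).ne'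

theorem isUnit_sqrtDiag (hB : ∀ i, 0 < B i i) : IsUnit (sqrtDiag B) :=
  isUnit_diagonal.2 (Pi.isUnit_iff.2 fun i => (sqrtDiag_apply_self_ne_zero hB i).isUnit)

theorem sqrtDiag_inv (hB : ∀ i, 0 < B i i) :
    (sqrtDiag B)⁻¹ = diagonal fun i => ((√(B i i).re : ℂ))⁻¹ := by
  refine inv_eq_right_inv ?_
  rw [sqrtDiag, diagonal_mul_diagonal, ← diagonal_one]
  exact congrArg diagonal (funext fun i => mul_inv_cancel₀ (sqrtDiag_apply_self_ne_zero hB i))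

theorem hatM_apply (hB : ∀ i, 0 < B i i) (i j : Fin n) :
    hatM B i j = (√(B i i).re : ℂ)⁻¹ * B i j * (√(B j j).re : ℂ)⁻¹ := by
  rw [hatM, sqrtDiag_inv hB, mul_diagonal, diagonal_mul]

theorem hatM_apply_self (hB : ∀ i, 0 < B i i) (i : Fin n) : hatM B i i = 1 := by
  obtain ⟨hre, him⟩ := Complex.pos_iff.1 (hB i)
  have hsq : (√(B i i).re : ℂ) ^ 2 = B i i := by
    rw [← Complex.ofReal_pow, Real.sq_sqrt hre.le]
    exact Complex.ext rfl him
  have hne := sqrtDiag_apply_self_ne_zero hB i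
  rw [hatM_apply hB]
  set r := (√(B i i).re : ℂ)
  rw [← hsq]
  field_simp

theorem posDef_hatM (hB : B.PosDef) : (hatM B).PosDef := by
  have hC := (isHermitian_sqrtDiag B).inv
  have hu : IsUnit (sqrtDiag B)⁻¹ :=
    isUnit_nonsing_inv_iff.2 (isUnit_sqrtDiag fun _ => hB.diag_pos)
  rw [hatM]
  nth_rewrite 1 [← hC.eq]
  exact (IsUnit.posDef_star_left_conjugate_iff hu).2 hB

end DiagonalNormalization

/-- For Hermitian positive definite `B`,
`κ(B̂) ≤ (1 + √(Γ(B)/2) + Γ(B)/2)²`. -/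
theorem kappa_hat_le_of_gamma {n : ℕ} (B : Matrix (Fin n) (Fin n) ℂ) (hB : B.PosDef) :
    kappa (hatM B) ≤ (1 + Real.sqrt (Gamma B / 2) + Gamma B / 2) ^ 2 := by
  have hA := posDef_hatM hB
  have hΓ : ∑ i, ((hA.isHermitian.eigenvalues i)⁻¹ + hA.isHermitian.eigenvalues i - 2) =
      Gamma B := by
    rw [← hA.re_trace_inv_sub_card (hatM_apply_self fun _ => hB.diag_pos), Fintype.card_fin]
    rfl
  rw [kappa, opNorm_eq_l2_opNorm, opNorm_eq_l2_opNorm, hA.l2_opNorm_mul_l2_opNorm_inv]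
  exact norm_mul_norm_inv_le_of_sum_le hA.eigenvalues_pos hΓ.le
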